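/- arXiv:1305.3114 — 2 statements merged into one kernel-verified Lean document; each statement's English description precedes it below -/
import Mathlib

section
/- Let t : ℝ → ℝ be a measurable function with 0 < t(x) < 1 for all x, and for |x|, |y| ≥ 2 define K(x,y) = ∫ over the intersection of the intervals [(x−1)/(2t(x)), (x+1)/(2t(x))] and [(y−1)/(2t(y)), (y+1)/(2t(y))] of dξ/|ξ|. Then there is an absolute constant C such that K(x,y) ≤ C min(1/|x|, 1/|y|) for all |x|, |y| ≥ 2. -/
open MeasureTheory Set

/- On `Icc ((x - 1) / c) ((x + 1) / c)` one has `|c ξ - x| ≤ 1 ≤ |x| / 2`, so `1 / |ξ| ≤ 2 c / |x|`,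
while the interval has length `2 / c`; the product `4 / |x|` does not depend on `c`. -/

lemma abs_le_two_mul_abs_of_mem_Icc_div {c x ξ : ℝ} (hc : 0 < c) (hx : 2 ≤ |x|)
    (hξ : ξ ∈ Icc ((x - 1) / c) ((x + 1) / c)) : |x| ≤ 2 * (c * |ξ|) := by
  obtain ⟨hlo, hhi⟩ := hξ
  rw [div_le_iff₀ hc] at hlo
  rw [le_div_iff₀ hc] at hhi
  have hdist : |x - c * ξ| ≤ 1 := abs_le.mpr ⟨by linarith, by linarith⟩
  have htri := abs_sub_abs_le_abs_sub x (c * ξ)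
  rw [abs_mul, abs_of_pos hc] at htri
  linarith

lemma volume_real_le_of_subset_Icc_div {c x : ℝ} (hc : 0 < c) {s : Set ℝ}
    (hs : s ⊆ Icc ((x - 1) / c) ((x + 1) / c)) : volume.real s ≤ 2 / c := by
  calc volume.real s ≤ volume.real (Icc ((x - 1) / c) ((x + 1) / c)) :=
        measureReal_mono hs measure_Icc_lt_top.ne
    _ = 2 / c := by
        rw [Real.volume_real_Icc_of_le (div_le_div_of_nonneg_right (by linarith) hc.le)]
        ring

lemma setIntegral_one_div_abs_le_of_subset_Icc_div {c x : ℝ} (hc : 0 < c) (hx : 2 ≤ |x|)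
    {s : Set ℝ} (hs : s ⊆ Icc ((x - 1) / c) ((x + 1) / c)) :
    ∫ ξ in s, 1 / |ξ| ≤ 4 / |x| := by
  have hx0 : 0 < |x| := by linarith
  have hbound : ∀ ξ ∈ s, ‖1 / |ξ|‖ ≤ 2 * c / |x| := by
    intro ξ hξ
    have hξx := abs_le_two_mul_abs_of_mem_Icc_div hc hx (hs hξ)
    have hξ0 : 0 < |ξ| := by nlinarith [abs_nonneg ξ]
    rw [Real.norm_of_nonneg (by positivity), div_le_div_iff₀ hξ0 hx0]
    linarith
  have hfin : volume s < ⊤ := (measure_mono hs).trans_lt measure_Icc_lt_top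
  calc ∫ ξ in s, 1 / |ξ| ≤ ‖∫ ξ in s, 1 / |ξ|‖ := le_abs_self _
    _ ≤ 2 * c / |x| * volume.real s := norm_setIntegral_le_of_norm_le_const hfin hbound
    _ ≤ 2 * c / |x| * (2 / c) := by
        gcongr
        exact volume_real_le_of_subset_Icc_div hc hs
    _ = 4 / |x| := by field_simp; ring

theorem stmt_9 : ∃ C : ℝ, 0 < C ∧ ∀ (t : ℝ → ℝ), Measurable t →
    (∀ x, 0 < t x ∧ t x < 1) → ∀ x y : ℝ, 2 ≤ |x| → 2 ≤ |y| →
    (∫ ξ in Set.Icc ((x-1)/(2*t x)) ((x+1)/(2*t x)) ∩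
            Set.Icc ((y-1)/(2*t y)) ((y+1)/(2*t y)), 1/|ξ|) ≤
      C * min (1/|x|) (1/|y|) := by
  refine ⟨4, by norm_num, fun t _ ht x y hx hy => ?_⟩
  have htx : 0 < 2 * t x := by linarith [(ht x).1]
  have hty : 0 < 2 * t y := by linarith [(ht y).1]
  rw [mul_min_of_nonneg _ _ (by norm_num : (0 : ℝ) ≤ 4), mul_one_div, mul_one_div]
  exact le_min (setIntegral_one_div_abs_le_of_subset_Icc_div htx hx inter_subset_left)
    (setIntegral_one_div_abs_le_of_subset_Icc_div hty hy inter_subset_right)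
end

section
/- If there is a constant C such that for every Schwartz function f and every measurable function t : ℝ → (0,1), the operator Sf(x) = ∫ e^{i t(x) ξ²} e^{ixξ} \hat f(ξ) dξ satisfies ‖Sf‖_{L²(ℝ)} ≤ C ‖f‖_{H_s}, then s ≥ 1/2. -/
open MeasureTheory

/-- Fourier transform with the paper's normalization: `f̂(ξ) = ∫ e^{-ixξ} f(x) dx`. -/
noncomputable def fourierHat (f : ℝ → ℂ) (ξ : ℝ) : ℂ :=
  ∫ x : ℝ, Complex.exp (-(Complex.I * x * ξ)) * f x

/-!
Test the estimate on the wave packet `f_R(x) = e^{-x²/2 + iRx}`, whose Fourier transform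
`√(2π) e^{-(ξ-R)²/2}` is concentrated at frequency `R`; by Peetre's inequality its squared
`H^s` norm is `O((1 + R²)^σ)` with `σ = max s 0`. For a constant time `t(x) = τ`, `S f_R(x)`
is a Gaussian integral and `|S f_R(x)|² = 4π² / √(1 + 4τ²) · exp (-(x + 2Rτ)² / (1 + 4τ²))`.
Choosing `t(x) = -x / (2R)` on `(-2R, 0)` makes the phase `t ξ² + x ξ` stationary at `ξ = R`,
so the exponent vanishes there and `‖S f_R‖²_{L²} ≥ 2π² R`. Thus `R ≲ C² (1 + R²)^σ` for all
large `R`, which forces `σ ≥ 1/2`, i.e. `s ≥ 1/2`.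
-/

open Complex Filter Polynomial Real Set Topology

section GaussianSchwartz

lemma exists_iteratedDeriv_cexp_quadratic_eq (b c : ℂ) (n : ℕ) :
    ∃ p : ℂ[X], iteratedDeriv n (fun x : ℝ ↦ cexp (b * x ^ 2 + c * x)) =
      fun x : ℝ ↦ p.eval (x : ℂ) * cexp (b * x ^ 2 + c * x) := by
  induction n with
  | zero => exact ⟨1, by simp⟩
  | succ n ih =>
    obtain ⟨p, hp⟩ := ih
    refine ⟨derivative p + p * (C (2 * b) * X + C c), funext fun x ↦ ?_⟩
    have hq : HasDerivAt (fun z : ℂ ↦ b * z ^ 2 + c * z) (2 * b * x + c) x := by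
      refine (((hasDerivAt_pow 2 (x : ℂ)).const_mul b).fun_add
        ((hasDerivAt_id' (x : ℂ)).const_mul c)).congr_deriv ?_
      push_cast
      ring
    have hd := (p.hasDerivAt (x : ℂ)).comp_ofReal.fun_mul hq.cexp.comp_ofReal
    rw [iteratedDeriv_succ, hp, hd.deriv]
    simp only [eval_add, eval_mul, eval_C, eval_X]
    ring

variable {b c : ℂ}

lemma tendsto_abs_pow_mul_norm_cexp_quadratic (hb : b.re < 0) (m : ℕ) :
    Tendsto (fun x : ℝ ↦ |x| ^ m * ‖cexp (b * x ^ 2 + c * x)‖) (cocompact ℝ) (𝓝 0) := by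
  convert (cexp_neg_quadratic_isLittleO_abs_rpow_cocompact hb c (-m)).norm_left
    |>.tendsto_div_nhds_zero using 2 with x
  rw [Real.rpow_neg (abs_nonneg x), Real.rpow_natCast, div_inv_eq_mul, mul_comm]

lemma exists_abs_pow_mul_norm_cexp_quadratic_le (hb : b.re < 0) (m : ℕ) :
    ∃ M, ∀ x : ℝ, |x| ^ m * ‖cexp (b * x ^ 2 + c * x)‖ ≤ M := by
  let F : ZeroAtInftyContinuousMap ℝ ℝ :=
    ⟨⟨fun x : ℝ ↦ |x| ^ m * ‖cexp (b * x ^ 2 + c * x)‖, by fun_prop⟩,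
      tendsto_abs_pow_mul_norm_cexp_quadratic hb m⟩
  exact ⟨‖F.toBCF‖, fun x ↦ (le_abs_self _).trans (F.toBCF.norm_coe_le_norm x)⟩

lemma exists_abs_pow_mul_norm_eval_mul_cexp_quadratic_le (hb : b.re < 0) (p : ℂ[X]) (k : ℕ) :
    ∃ M, ∀ x : ℝ, |x| ^ k * ‖p.eval (x : ℂ) * cexp (b * x ^ 2 + c * x)‖ ≤ M := by
  induction p using Polynomial.induction_on' generalizing k with
  | add p q hp hq =>
    obtain ⟨M, hM⟩ := hp k
    obtain ⟨N, hN⟩ := hq k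
    refine ⟨M + N, fun x ↦ ?_⟩
    rw [eval_add, add_mul]
    exact (mul_le_mul_of_nonneg_left (norm_add_le _ _) (by positivity)).trans
      (by rw [mul_add]; exact add_le_add (hM x) (hN x))
  | monomial n a =>
    obtain ⟨M, hM⟩ := exists_abs_pow_mul_norm_cexp_quadratic_le (c := c) hb (k + n)
    refine ⟨‖a‖ * M, fun x ↦ ?_⟩
    calc |x| ^ k * ‖(monomial n a).eval (x : ℂ) * cexp (b * x ^ 2 + c * x)‖
        = ‖a‖ * (|x| ^ (k + n) * ‖cexp (b * x ^ 2 + c * x)‖) := by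
          simp only [eval_monomial, norm_mul, norm_pow, norm_real, Real.norm_eq_abs]
          ring
      _ ≤ ‖a‖ * M := mul_le_mul_of_nonneg_left (hM x) (norm_nonneg a)

noncomputable def gaussianSchwartz (b c : ℂ) (hb : b.re < 0) : SchwartzMap ℝ ℂ where
  toFun x := cexp (b * x ^ 2 + c * x)
  smooth' := by
    have : ContDiff ℝ ((⊤ : ℕ∞) : WithTop ℕ∞) ((↑) : ℝ → ℂ) := ofRealCLM.contDiff
    exact ((contDiff_const.mul (this.pow 2)).add (contDiff_const.mul this)).cexp
  decay' k n := by
    obtain ⟨p, hp⟩ := exists_iteratedDeriv_cexp_quadratic_eq b c n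
    obtain ⟨M, hM⟩ := exists_abs_pow_mul_norm_eval_mul_cexp_quadratic_le hb p k
    refine ⟨M, fun x ↦ ?_⟩
    rw [norm_iteratedFDeriv_eq_norm_iteratedDeriv, hp, Real.norm_eq_abs]
    exact hM x

lemma gaussianSchwartz_apply (hb : b.re < 0) (x : ℝ) :
    gaussianSchwartz b c hb x = cexp (b * x ^ 2 + c * x) := rfl

end GaussianSchwartz

lemma cpow_half_ofReal {a : ℝ} (ha : 0 ≤ a) : (a : ℂ) ^ (1 / 2 : ℂ) = (√a : ℝ) := by
  rw [Real.sqrt_eq_rpow, ofReal_cpow ha]; norm_num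

lemma sq_norm_cpow_half (z : ℂ) : ‖z ^ (1 / 2 : ℂ)‖ ^ 2 = ‖z‖ := by
  rw [show (1 / 2 : ℂ) = ((1 / 2 : ℝ) : ℂ) by norm_num, norm_cpow_real, ← Real.sqrt_eq_rpow,
    Real.sq_sqrt (norm_nonneg z)]

lemma re_chirp_exponent (τ x R : ℝ) :
    (-(R : ℂ) ^ 2 / 2 - (I * x + R) ^ 2 / (4 * (I * τ - 1 / 2))).re =
      -(x + 2 * R * τ) ^ 2 / (2 * (1 + 4 * τ ^ 2)) := by
  have : (1 + 4 * τ ^ 2) ≠ 0 := by positivity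
  simp only [pow_two, one_div, sub_re, div_ofNat_re, neg_re, mul_re, ofReal_re, ofReal_im,
    mul_zero, sub_zero, div_re, add_re, I_re, zero_mul, I_im, sub_self, zero_add, add_im, mul_im,
    one_mul, add_zero, re_ofNat, inv_re, normSq_ofNat, div_self_mul_self', zero_sub, mul_neg,
    im_ofNat, sub_im, inv_im, neg_zero, zero_div, normSq_apply, neg_mul, neg_neg]
  field_simp
  ring

lemma norm_half_sub_I_mul (τ : ℝ) : ‖(1 / 2 : ℂ) - I * τ‖ = √(1 + 4 * τ ^ 2) / 2 := by
  rw [show (1 / 2 : ℂ) - I * τ = ((1 / 2 : ℝ) : ℂ) + ((-τ : ℝ) : ℂ) * I by push_cast; ring,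
    norm_add_mul_I, show (1 + 4 * τ ^ 2) = 2 ^ 2 * ((1 / 2) ^ 2 + (-τ) ^ 2) by ring,
    Real.sqrt_mul' _ (by positivity), Real.sqrt_sq zero_le_two]
  ring

noncomputable def modulatedGaussian (R : ℝ) : SchwartzMap ℝ ℂ :=
  gaussianSchwartz (-1 / 2) (I * R) (by norm_num)

lemma fourierHat_modulatedGaussian (R ξ : ℝ) :
    fourierHat (modulatedGaussian R) ξ = ↑(√(2 * π) * rexp (-(ξ - R) ^ 2 / 2)) := by
  have h (x : ℝ) : cexp (-(I * x * ξ)) * modulatedGaussian R x =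
      cexp (-1 / 2 * x ^ 2 + I * ↑(R - ξ) * x + 0) := by
    rw [modulatedGaussian, gaussianSchwartz_apply, ← Complex.exp_add]
    push_cast
    ring_nf
  simp_rw [fourierHat, h]
  rw [integral_cexp_quadratic (by norm_num), show π / -(-1 / 2 : ℂ) = ((2 * π : ℝ) : ℂ) by
    push_cast; ring, cpow_half_ofReal (by positivity)]
  push_cast
  congr 2
  rw [mul_pow, I_sq]
  ring

noncomputable def intensity (R τ x : ℝ) : ℝ :=
  4 * π ^ 2 / √(1 + 4 * τ ^ 2) * rexp (-(x + 2 * R * τ) ^ 2 / (1 + 4 * τ ^ 2))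

lemma norm_sq_integral_chirp_mul_fourierHat_modulatedGaussian (R τ x : ℝ) :
    ‖∫ ξ : ℝ, cexp (I * ↑(τ * ξ ^ 2 + x * ξ)) * fourierHat (modulatedGaussian R) ξ‖ ^ 2 =
      intensity R τ x := by
  have h (ξ : ℝ) : cexp (I * ↑(τ * ξ ^ 2 + x * ξ)) * fourierHat (modulatedGaussian R) ξ =
      ↑(√(2 * π)) * cexp ((I * τ - 1 / 2) * ξ ^ 2 + (I * x + R) * ξ + -(R : ℂ) ^ 2 / 2) := by
    rw [fourierHat_modulatedGaussian, ofReal_mul, mul_left_comm, ofReal_exp, ← Complex.exp_add]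
    push_cast
    ring_nf
  have hb : (I * τ - 1 / 2 : ℂ).re < 0 := by simp
  simp_rw [h]
  rw [integral_const_mul, integral_cexp_quadratic hb, neg_sub, norm_mul, norm_mul, mul_pow,
    mul_pow, sq_norm_cpow_half, norm_div, norm_half_sub_I_mul, norm_real, Real.norm_eq_abs, sq_abs,
    Real.sq_sqrt (by positivity), Complex.norm_exp, re_chirp_exponent, ← Real.exp_nat_mul]
  have : 0 < √(1 + 4 * τ ^ 2) := by positivity
  rw [intensity, norm_real, Real.norm_of_nonneg pi_pos.le, Nat.cast_ofNat,
    show 2 * (-(x + 2 * R * τ) ^ 2 / (2 * (1 + 4 * τ ^ 2))) = -(x + 2 * R * τ) ^ 2 / (1 + 4 * τ ^ 2)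
      by field_simp]
  field_simp
  ring

lemma intensity_nonneg (R τ x : ℝ) : 0 ≤ intensity R τ x := by
  unfold intensity; positivity

lemma intensity_le (R τ x : ℝ) : intensity R τ x ≤ 4 * π ^ 2 := by
  have h1 : 1 ≤ √(1 + 4 * τ ^ 2) := Real.one_le_sqrt.mpr (by nlinarith)
  have h2 : rexp (-(x + 2 * R * τ) ^ 2 / (1 + 4 * τ ^ 2)) ≤ 1 :=
    Real.exp_le_one_iff.mpr (div_nonpos_of_nonpos_of_nonneg (by nlinarith) (by positivity))
  calc intensity R τ x ≤ 4 * π ^ 2 / 1 * 1 := by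
        unfold intensity; gcongr
    _ = 4 * π ^ 2 := by ring

lemma intensity_half_le (R x : ℝ) :
    intensity R (1 / 2) x ≤ 4 * π ^ 2 * rexp (-(x + R) ^ 2 / 2) := by
  rw [intensity, show 1 + 4 * (1 / 2 : ℝ) ^ 2 = 2 by norm_num,
    show x + 2 * R * (1 / 2) = x + R by ring]
  gcongr
  exact div_le_self (by positivity) (Real.one_le_sqrt.mpr one_le_two)

lemma pi_sq_le_intensity {R τ x : ℝ} (hx : x + 2 * R * τ = 0) (h0 : 0 ≤ τ) (h1 : τ ≤ 1) :
    π ^ 2 ≤ intensity R τ x := by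
  have : √(1 + 4 * τ ^ 2) ≤ 4 := Real.sqrt_le_iff.mpr ⟨by norm_num, by nlinarith⟩
  have : 0 < √(1 + 4 * τ ^ 2) := by positivity
  rw [intensity, hx, zero_pow two_ne_zero, neg_zero, zero_div, Real.exp_zero, mul_one,
    le_div_iff₀ this]
  nlinarith [pi_pos]

lemma measurable_intensity {R : ℝ} {t : ℝ → ℝ} (ht : Measurable t) :
    Measurable fun x ↦ intensity R (t x) x := by
  unfold intensity; fun_prop

noncomputable def stationaryTime (R : ℝ) : ℝ → ℝ :=
  (Ioo (-(2 * R)) 0).piecewise (fun x ↦ -x / (2 * R)) fun _ ↦ 1 / 2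

lemma measurable_stationaryTime (R : ℝ) : Measurable (stationaryTime R) :=
  Measurable.piecewise measurableSet_Ioo (by fun_prop) measurable_const

lemma stationaryTime_mem_Ioo {R : ℝ} (hR : 0 < R) (x : ℝ) : stationaryTime R x ∈ Ioo 0 1 := by
  by_cases hx : x ∈ Ioo (-(2 * R)) 0
  · rw [stationaryTime, piecewise_eq_of_mem _ _ _ hx]
    exact ⟨div_pos (by linarith [hx.2]) (by positivity),
      (div_lt_one (by positivity)).mpr (by linarith [hx.1])⟩
  · rw [stationaryTime, piecewise_eq_of_notMem _ _ _ hx]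
    norm_num

lemma add_two_mul_stationaryTime {R x : ℝ} (hR : 0 < R) (hx : x ∈ Ioo (-(2 * R)) 0) :
    x + 2 * R * stationaryTime R x = 0 := by
  rw [stationaryTime, piecewise_eq_of_mem _ _ _ hx]
  field_simp
  ring

lemma integrable_intensity_stationaryTime (R : ℝ) :
    Integrable fun x ↦ intensity R (stationaryTime R x) x := by
  have hbound : Integrable fun x ↦
      (Ioo (-(2 * R)) 0).indicator (fun _ ↦ 4 * π ^ 2) x + 4 * π ^ 2 * rexp (-(x + R) ^ 2 / 2) := by
    refine ((integrable_indicator_iff measurableSet_Ioo).mpr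
      (integrableOn_const measure_Ioo_lt_top.ne)).add (Integrable.const_mul ?_ _)
    simpa [div_eq_inv_mul, neg_mul] using
      (integrable_exp_neg_mul_sq (by norm_num : (0 : ℝ) < 1 / 2)).comp_add_right R
  refine hbound.mono' (measurable_intensity (measurable_stationaryTime R)).aestronglyMeasurable
    (ae_of_all _ fun x ↦ ?_)
  rw [Real.norm_of_nonneg (intensity_nonneg _ _ _)]
  by_cases hx : x ∈ Ioo (-(2 * R)) 0
  · rw [indicator_of_mem hx]
    have := intensity_le R (stationaryTime R x) x
    have : 0 ≤ 4 * π ^ 2 * rexp (-(x + R) ^ 2 / 2) := by positivity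
    linarith
  · rw [indicator_of_notMem hx, zero_add, stationaryTime, piecewise_eq_of_notMem _ _ _ hx]
    exact intensity_half_le R x

lemma le_integral_intensity_stationaryTime {R : ℝ} (hR : 0 < R) :
    2 * π ^ 2 * R ≤ ∫ x, intensity R (stationaryTime R x) x := by
  have hint := integrable_intensity_stationaryTime R
  calc 2 * π ^ 2 * R = π ^ 2 * volume.real (Ioo (-(2 * R)) 0) := by
        rw [Real.volume_real_Ioo_of_le (by linarith)]; ring
    _ ≤ ∫ x in Ioo (-(2 * R)) 0, intensity R (stationaryTime R x) x :=
        setIntegral_ge_of_const_le_real measurableSet_Ioo measure_Ioo_lt_top.ne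
          (fun x hx ↦ pi_sq_le_intensity (add_two_mul_stationaryTime hR hx)
            (stationaryTime_mem_Ioo hR x).1.le (stationaryTime_mem_Ioo hR x).2.le) hint.integrableOn
    _ ≤ ∫ x, intensity R (stationaryTime R x) x :=
        setIntegral_le_integral hint (ae_of_all _ fun x ↦ intensity_nonneg _ _ _)

lemma one_add_sq_rpow_le {s σ : ℝ} (hsσ : s ≤ σ) (hσ0 : 0 ≤ σ) (hσ1 : σ ≤ 1) (R ξ : ℝ) :
    (1 + ξ ^ 2) ^ s ≤ 2 * (1 + R ^ 2) ^ σ * (1 + (ξ - R) ^ 2) := by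
  have peetre : 1 + ξ ^ 2 ≤ 2 * (1 + R ^ 2) * (1 + (ξ - R) ^ 2) := by
    nlinarith [sq_nonneg (ξ - 2 * R), mul_nonneg (sq_nonneg R) (sq_nonneg (ξ - R))]
  calc (1 + ξ ^ 2) ^ s ≤ (1 + ξ ^ 2) ^ σ := rpow_le_rpow_of_exponent_le (by nlinarith) hsσ
    _ ≤ (2 * (1 + R ^ 2) * (1 + (ξ - R) ^ 2)) ^ σ := rpow_le_rpow (by positivity) peetre hσ0
    _ = 2 ^ σ * (1 + R ^ 2) ^ σ * (1 + (ξ - R) ^ 2) ^ σ := by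
        rw [mul_rpow (by positivity) (by positivity), mul_rpow (by positivity) (by positivity)]
    _ ≤ 2 * (1 + R ^ 2) ^ σ * (1 + (ξ - R) ^ 2) := by
        gcongr
        · exact rpow_le_self_of_one_le one_le_two hσ1
        · exact rpow_le_self_of_one_le (by nlinarith) hσ1

lemma integrable_one_add_sq_mul_exp_neg_sq :
    Integrable fun v : ℝ ↦ (1 + v ^ 2) * rexp (-v ^ 2) := by
  have h0 := integrable_exp_neg_mul_sq one_pos
  have h2 := integrable_rpow_mul_exp_neg_mul_sq one_pos (by norm_num : (-1 : ℝ) < 2)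
  simp only [neg_mul, one_mul, rpow_two] at h0 h2
  refine (h0.add h2).congr (ae_of_all _ fun v ↦ ?_)
  simp only [Pi.add_apply]
  ring

lemma integral_one_add_sq_rpow_mul_exp_le {s σ : ℝ} (hsσ : s ≤ σ) (hσ0 : 0 ≤ σ) (hσ1 : σ ≤ 1)
    (R : ℝ) :
    ∫ ξ, (1 + ξ ^ 2) ^ s * rexp (-(ξ - R) ^ 2) ≤
      2 * (1 + R ^ 2) ^ σ * ∫ v, (1 + v ^ 2) * rexp (-v ^ 2) := by
  rw [← integral_sub_right_eq_self (fun v ↦ (1 + v ^ 2) * rexp (-v ^ 2)) R, ← integral_const_mul]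
  refine integral_mono_of_nonneg (ae_of_all _ fun ξ ↦ by positivity)
    ((integrable_one_add_sq_mul_exp_neg_sq.comp_sub_right R).const_mul _) (ae_of_all _ fun ξ ↦ ?_)
  dsimp only
  rw [← mul_assoc]
  exact mul_le_mul_of_nonneg_right (one_add_sq_rpow_le hsσ hσ0 hσ1 R ξ) (exp_nonneg _)

lemma not_forall_mul_le_mul_one_add_sq_rpow {σ a A : ℝ} (hσ0 : 0 ≤ σ) (hσ : σ < 1 / 2)
    (ha : 0 < a) : ¬ ∀ R ≥ 1, a * R ≤ A * (1 + R ^ 2) ^ σ := by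
  intro h
  obtain ⟨R, hRA, hR1⟩ := (((tendsto_rpow_atTop (by linarith : 0 < 1 - 2 * σ)).eventually_gt_atTop
    (2 * A / a)).and (eventually_ge_atTop 1)).exists
  have hR0 : 0 < R := by linarith
  have hRσ : 0 < R ^ (2 * σ) := rpow_pos_of_pos hR0 _
  have hA : 0 < A := pos_of_mul_pos_left ((mul_pos ha hR0).trans_le (h R hR1)) (by positivity)
  have hgrowth : (1 + R ^ 2) ^ σ ≤ 2 * R ^ (2 * σ) := calc
    (1 + R ^ 2) ^ σ ≤ (2 * R ^ 2) ^ σ := rpow_le_rpow (by positivity) (by nlinarith) hσ0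
    _ = 2 ^ σ * R ^ (2 * σ) := by
        rw [mul_rpow zero_le_two (by positivity), rpow_mul hR0.le, rpow_two]
    _ ≤ 2 * R ^ (2 * σ) := by
        gcongr; exact rpow_le_self_of_one_le one_le_two (by linarith)
  have : a * R ^ (1 - 2 * σ) ≤ 2 * A := by
    rw [rpow_sub hR0, rpow_one, mul_div_assoc', div_le_iff₀ hRσ]
    nlinarith [h R hR1]
  rw [div_lt_iff₀' ha] at hRA
  linarith

lemma sq_norm_fourierHat_modulatedGaussian (R ξ : ℝ) :
    ‖fourierHat (modulatedGaussian R) ξ‖ ^ 2 = 2 * π * rexp (-(ξ - R) ^ 2) := by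
  rw [fourierHat_modulatedGaussian, norm_real, Real.norm_eq_abs, sq_abs, mul_pow,
    sq_sqrt (by positivity), ← Real.exp_nat_mul]
  ring_nf

theorem stmt_16 (s C : ℝ)
    (h : ∀ (t : ℝ → ℝ), Measurable t → (∀ x, 0 < t x ∧ t x < 1) →
      ∀ f : SchwartzMap ℝ ℂ,
      (∫ x : ℝ, ‖∫ ξ : ℝ, Complex.exp (Complex.I * ((t x * ξ^2 + x * ξ) : ℝ)) *
          fourierHat f ξ‖^2) ≤
        C^2 * ∫ ξ : ℝ, (1 + ξ^2) ^ s * ‖fourierHat f ξ‖^2) :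
    1/2 ≤ s := by
  by_contra! hs
  have hσ : max s 0 < 1 / 2 := max_lt hs one_half_pos
  set K := ∫ v, (1 + v ^ 2) * rexp (-v ^ 2)
  refine not_forall_mul_le_mul_one_add_sq_rpow (le_max_right s 0) hσ (by positivity : 0 < 2 * π ^ 2)
    (A := C ^ 2 * (4 * π * K)) fun R hR ↦ ?_
  have hR0 : 0 < R := by linarith
  have key := h (stationaryTime R) (measurable_stationaryTime R)
    (stationaryTime_mem_Ioo hR0) (modulatedGaussian R)
  simp_rw [norm_sq_integral_chirp_mul_fourierHat_modulatedGaussian,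
    sq_norm_fourierHat_modulatedGaussian, mul_left_comm _ (2 * π), integral_const_mul] at key
  calc 2 * π ^ 2 * R ≤ ∫ x, intensity R (stationaryTime R x) x :=
        le_integral_intensity_stationaryTime hR0
    _ ≤ C ^ 2 * (2 * π * ∫ ξ, (1 + ξ ^ 2) ^ s * rexp (-(ξ - R) ^ 2)) := key
    _ ≤ C ^ 2 * (2 * π * (2 * (1 + R ^ 2) ^ max s 0 * K)) := by
        gcongr
        exact integral_one_add_sq_rpow_mul_exp_le (le_max_left s 0) (le_max_right s 0)
          (by linarith) R
    _ = C ^ 2 * (4 * π * K) * (1 + R ^ 2) ^ max s 0 := by ring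
end
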